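/- Let Q_q = [[b, b/a], [1, 0]] with a, b nonzero reals. For even n ≥ 2, the inverse of Q_q^n equals (b/a)^(−n/2) · [[q_{n−1}, −(b/a) q_n], [−q_n, q_{n+1}]], where q_k is the bi-periodic Fibonacci sequence. -/

import Mathlib

/-- Bi-periodic Fibonacci sequence: q 0 = 0, q 1 = 1,
    q n = a * q (n-1) + q (n-2) if n even, q n = b * q (n-1) + q (n-2) if n odd. -/
def bpFib (a b : ℝ) : ℕ → ℝ
  | 0 => 0
  | 1 => 1
  | n + 2 => (if Even (n + 2) then a else b) * bpFib a b (n + 1) + bpFib a b n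

/-- Bi-periodic Lucas sequence: l 0 = 2, l 1 = a,
    l n = b * l (n-1) + l (n-2) if n even, l n = a * l (n-1) + l (n-2) if n odd. -/
def bpLucas (a b : ℝ) : ℕ → ℝ
  | 0 => 2
  | 1 => a
  | n + 2 => (if Even (n + 2) then b else a) * bpLucas a b (n + 1) + bpLucas a b n

/-
The matrix `Q_q` satisfies `Q_q ^ 2 = (b / a) • B` with `B = !![a * b + 1, b; a, 1]`, and the
bi-periodic recurrence, taken two steps at a time, says that the powers of `B` are the matrices
`B ^ (m + 1) = !![q (2m+3), (b / a) q (2m+2); q (2m+2), q (2m+1)]`. Since `det B = 1`, these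
powers are unimodular (a Cassini identity), so inverting `Q_q ^ (2m+2) = (b / a) ^ (m+1) • B ^ (m+1)`
amounts to inverting the scalar and taking the adjugate.
-/

lemma bpFib_two_mul_add_two (a b : ℝ) (m : ℕ) :
    bpFib a b (2 * m + 2) = a * bpFib a b (2 * m + 1) + bpFib a b (2 * m) := by
  simp [bpFib, Nat.even_add]

lemma bpFib_two_mul_add_three (a b : ℝ) (m : ℕ) :
    bpFib a b (2 * m + 3) = b * bpFib a b (2 * m + 2) + bpFib a b (2 * m + 1) := by
  have hodd : ¬ Even (2 * m + 1 + 2) := by rw [Nat.not_even_iff_odd]; exact ⟨m + 1, by ring⟩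
  simp [bpFib, hodd]

noncomputable def bpFibMatrix (a b : ℝ) (m : ℕ) : Matrix (Fin 2) (Fin 2) ℝ :=
  !![bpFib a b (2 * m + 3), (b / a) * bpFib a b (2 * m + 2);
     bpFib a b (2 * m + 2), bpFib a b (2 * m + 1)]

lemma bpFibMatrix_zero {a : ℝ} (b : ℝ) (ha : a ≠ 0) :
    bpFibMatrix a b 0 = !![a * b + 1, b; a, 1] := by
  have h1 : bpFib a b 1 = 1 := rfl
  have h2 : bpFib a b 2 = a := by simp [bpFib]
  have h3 : bpFib a b 3 = a * b + 1 := by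
    simpa [h1, h2, mul_comm] using bpFib_two_mul_add_three a b 0
  rw [bpFibMatrix, mul_zero, zero_add, zero_add, h1, h2, h3, div_mul_cancel₀ b ha]

lemma bpFibMatrix_succ {a : ℝ} (b : ℝ) (ha : a ≠ 0) (m : ℕ) :
    bpFibMatrix a b (m + 1) = bpFibMatrix a b m * bpFibMatrix a b 0 := by
  have h3 : bpFib a b (2 * m + 3) = b * bpFib a b (2 * m + 2) + bpFib a b (2 * m + 1) :=
    bpFib_two_mul_add_three a b m
  have h4 : bpFib a b (2 * m + 4) = a * bpFib a b (2 * m + 3) + bpFib a b (2 * m + 2) :=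
    bpFib_two_mul_add_two a b (m + 1)
  have h5 : bpFib a b (2 * m + 5) = b * bpFib a b (2 * m + 4) + bpFib a b (2 * m + 3) :=
    bpFib_two_mul_add_three a b (m + 1)
  change !![bpFib a b (2 * m + 5), (b / a) * bpFib a b (2 * m + 4);
      bpFib a b (2 * m + 4), bpFib a b (2 * m + 3)] = bpFibMatrix a b m * bpFibMatrix a b 0
  rw [bpFibMatrix_zero b ha, bpFibMatrix, Matrix.mul_fin_two, h5, h4, h3]
  ext i j
  fin_cases i <;> fin_cases j <;> simp <;> field_simp <;> ring

lemma bpFibMatrix_eq_pow {a : ℝ} (b : ℝ) (ha : a ≠ 0) (m : ℕ) :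
    bpFibMatrix a b m = bpFibMatrix a b 0 ^ (m + 1) := by
  induction m with
  | zero => rw [pow_one]
  | succ m ih => rw [bpFibMatrix_succ b ha, ih, ← pow_succ]

lemma det_bpFibMatrix {a : ℝ} (b : ℝ) (ha : a ≠ 0) (m : ℕ) : (bpFibMatrix a b m).det = 1 := by
  rw [bpFibMatrix_eq_pow b ha, Matrix.det_pow, bpFibMatrix_zero b ha, Matrix.det_fin_two_of]
  ring

lemma Qq_pow_two_mul_add_two {a : ℝ} (b : ℝ) (ha : a ≠ 0) (m : ℕ) :
    (!![b, b / a; 1, 0] : Matrix (Fin 2) (Fin 2) ℝ) ^ (2 * m + 2) =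
      (b / a) ^ (m + 1) • bpFibMatrix a b m := by
  have hsq : (!![b, b / a; 1, 0] : Matrix (Fin 2) (Fin 2) ℝ) ^ 2 = (b / a) • bpFibMatrix a b 0 := by
    rw [bpFibMatrix_zero b ha, pow_two, Matrix.mul_fin_two]
    ext i j; fin_cases i <;> fin_cases j <;> simp <;> field_simp
  rw [show 2 * m + 2 = 2 * (m + 1) by ring, pow_mul, hsq, smul_pow, ← bpFibMatrix_eq_pow b ha]

lemma Matrix.inv_smul_of_det_eq_one {n K : Type*} [Fintype n] [DecidableEq n] [Field K]
    {k : K} (hk : k ≠ 0) {A : Matrix n n K} (hA : A.det = 1) : (k • A)⁻¹ = k⁻¹ • A.adjugate := by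
  apply Matrix.inv_eq_right_inv
  rw [Matrix.smul_mul, Matrix.mul_smul, smul_smul, Matrix.mul_adjugate, hA, one_smul,
    mul_inv_cancel₀ hk, one_smul]

theorem Qq_pow_inv (a b : ℝ) (ha : a ≠ 0) (hb : b ≠ 0) (n : ℕ) (hn : 2 ≤ n) (h : Even n) :
    ((!![b, b / a; 1, 0] : Matrix (Fin 2) (Fin 2) ℝ) ^ n)⁻¹ =
      (b / a) ^ (-((n / 2 : ℕ) : ℤ)) •
        !![bpFib a b (n - 1), -((b / a) * bpFib a b n);
           -bpFib a b n, bpFib a b (n + 1)] := by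
  obtain ⟨m, rfl⟩ : ∃ m, n = 2 * m + 2 := ⟨n / 2 - 1, by obtain ⟨k, rfl⟩ := h; omega⟩
  have hhalf : (2 * m + 2) / 2 = m + 1 := by omega
  rw [Qq_pow_two_mul_add_two b ha,
    Matrix.inv_smul_of_det_eq_one (pow_ne_zero _ (div_ne_zero hb ha)) (det_bpFibMatrix b ha m),
    bpFibMatrix, Matrix.adjugate_fin_two_of, hhalf, zpow_neg, zpow_natCast]
  rfl
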